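/- Let S ≥ 1, let r_1 > r_2 > … > r_S > 0 be real numbers, let m_1, …, m_S be positive integers, and set M = 2(m_1 + … + m_S). Define Ξ(ξ,λ) = ∏_{s=1}^S (|ξ|² + λ^{2/r_s})^{m_s} for ξ ∈ ℝⁿ and λ > 0. Fix an integer l with 0 ≤ l < M and let κ ∈ {1,…,S} satisfy 2(m_1+…+m_{κ−1}) ≤ l < 2(m_1+…+m_κ) (empty sum = 0), and define Ξ^{(−l−1/2)}(ξ',λ) = (|ξ'|² + λ^{2/r_κ})^{m_1+…+m_κ − l/2 − 1/4} · ∏_{s=κ+1}^S (|ξ'|² + λ^{2/r_s})^{m_s} for ξ' ∈ ℝ^{n−1}. Then for every λ₀ > 0 there exist constants C₁, C₂ > 0 such that for all λ ≥ λ₀ and all ξ' ∈ ℝ^{n−1}: C₁ Ξ^{(−l−1/2)}(ξ',λ) ≤ ( ∫_{−∞}^{∞} ξ_n^{2l} Ξ((ξ',ξ_n),λ)^{−2} dξ_n )^{−1/2} ≤ C₂ Ξ^{(−l−1/2)}(ξ',λ). -/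

import Mathlib

/-!
Along the line `ξ = (ξ', t)` one has `Ξ = ∏ₛ (aₛ + t²)^{mₛ}` with `aₛ = |ξ'|² + λ^{2/rₛ}`, and
for `λ ≥ λ₀` the decrease of `r` gives `aₛ ≲ a_κ` for `s ≤ κ` and `a_κ ≲ aₛ` for `s > κ`.
Upper bound for the integral: bound `aₛ + t²` below by `t²` for `s < κ` and by `aₛ` for `s > κ`;
what is left is `∫ t^{2j} (a_κ + t²)^{-2m_κ} dt` with `l = 2(m₁ + ⋯ + m_{κ-1}) + j`, which the
substitution `t = √a_κ u` turns into `a_κ^{j + 1/2 - 2m_κ}` times a constant, finite as `j < 2m_κ`.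
Lower bound: on `0 < t ≤ √a_κ` every factor `aₛ + t²` is comparable to `a_κ` (`s ≤ κ`) or to
`aₛ` (`s > κ`), and `∫₀^{√a_κ} t^{2l} dt = a_κ^{l + 1/2} / (2l + 1)`.
-/

open MeasureTheory Finset

noncomputable section

/-- The vector `(ξ', t) ∈ ℝ^{k+1}` obtained by appending a last coordinate. -/
def snocVec {k : ℕ} (ξ' : EuclideanSpace ℝ (Fin k)) (t : ℝ) :
    EuclideanSpace ℝ (Fin (k + 1)) :=
  (WithLp.equiv 2 (Fin (k + 1) → ℝ)).symm (Fin.snoc (WithLp.equiv 2 (Fin k → ℝ) ξ') t)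

/-- The weight function `Ξ(ξ,λ) = ∏_s (|ξ|² + λ^{2/r_s})^{m_s}` of a Newton polygon. -/
def XiWeight {n S : ℕ} (r : Fin S → ℝ) (m : Fin S → ℕ)
    (ξ : EuclideanSpace ℝ (Fin n)) (lam : ℝ) : ℝ :=
  ∏ s, (‖ξ‖ ^ 2 + lam ^ (2 / r s)) ^ m s

/-- The shifted weight function
`Ξ^{(-l-1/2)}(ξ',λ) = (|ξ'|² + λ^{2/r_κ})^{m₁+…+m_κ − l/2 − 1/4} ∏_{s>κ} (|ξ'|² + λ^{2/r_s})^{m_s}`. -/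
def XiShift {k S : ℕ} (r : Fin S → ℝ) (m : Fin S → ℕ) (l : ℕ) (κ : Fin S)
    (ξ' : EuclideanSpace ℝ (Fin k)) (lam : ℝ) : ℝ :=
  (‖ξ'‖ ^ 2 + lam ^ (2 / r κ)) ^ ((∑ s ∈ Finset.Iic κ, (m s : ℝ)) - l / 2 - 1 / 4)
    * ∏ s ∈ Finset.Ioi κ, (‖ξ'‖ ^ 2 + lam ^ (2 / r s)) ^ m s

lemma norm_snocVec_sq {k : ℕ} (ξ' : EuclideanSpace ℝ (Fin k)) (t : ℝ) :
    ‖snocVec ξ' t‖ ^ 2 = ‖ξ'‖ ^ 2 + t ^ 2 := by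
  rw [EuclideanSpace.norm_sq_eq, EuclideanSpace.norm_sq_eq]
  simp [snocVec, Fin.sum_univ_castSucc, WithLp.equiv_symm_apply]

lemma add_rpow_le_max_mul_add_rpow {x lam lam0 α β : ℝ} (hx : 0 ≤ x) (hlam0 : 0 < lam0)
    (hlam : lam0 ≤ lam) (hαβ : α ≤ β) :
    x + lam ^ α ≤ max 1 (lam0 ^ (α - β)) * (x + lam ^ β) := by
  have hlam' := hlam0.trans_le hlam
  have hβ := Real.rpow_nonneg hlam'.le β
  have hpow : lam ^ α ≤ lam0 ^ (α - β) * lam ^ β :=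
    calc lam ^ α = lam ^ (α - β) * lam ^ β := by rw [← Real.rpow_add hlam', sub_add_cancel]
      _ ≤ lam0 ^ (α - β) * lam ^ β :=
        mul_le_mul_of_nonneg_right (Real.rpow_le_rpow_of_nonpos hlam0 hlam (sub_nonpos.2 hαβ)) hβ
  rw [mul_add]
  exact add_le_add (le_mul_of_one_le_left hx (le_max_left _ _))
    (hpow.trans (mul_le_mul_of_nonneg_right (le_max_right _ _) hβ))

lemma rpow_neg_half_div_sq {c y : ℝ} (hc : 0 ≤ c) (hy : 0 ≤ y) :
    (c / y ^ 2) ^ (-(1 : ℝ) / 2) = c ^ (-(1 : ℝ) / 2) * y := by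
  rw [Real.div_rpow hc (sq_nonneg y), ← Real.rpow_natCast y 2, ← Real.rpow_mul hy]
  norm_num [Real.rpow_neg_one]

lemma integrable_pow_div_add_sq_pow {j N : ℕ} (hjN : j < N) {a : ℝ} (ha : 0 < a) :
    Integrable (fun t : ℝ => t ^ (2 * j) / (a + t ^ 2) ^ N) := by
  set c := min a 1
  have hc : 0 < c := lt_min ha one_pos
  refine (integrable_inv_one_add_sq.const_mul (c ^ N)⁻¹).mono'
    (Measurable.aestronglyMeasurable (by fun_prop)) (ae_of_all _ fun t => ?_)
  have h1t : 1 ≤ 1 + t ^ 2 := by nlinarith [sq_nonneg t]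
  have hca : c * (1 + t ^ 2) ≤ a + t ^ 2 := by
    nlinarith [min_le_left a 1, min_le_right a 1, sq_nonneg t]
  have hnum : t ^ (2 * j) * (1 + t ^ 2) ≤ (1 + t ^ 2) ^ N :=
    calc t ^ (2 * j) * (1 + t ^ 2) ≤ (1 + t ^ 2) ^ j * (1 + t ^ 2) := by
          rw [pow_mul]; gcongr; linarith
      _ = (1 + t ^ 2) ^ (j + 1) := (pow_succ _ _).symm
      _ ≤ (1 + t ^ 2) ^ N := pow_le_pow_right₀ h1t hjN
  rw [Real.norm_eq_abs, abs_of_nonneg (div_nonneg ((even_two_mul j).pow_nonneg t) (by positivity)),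
    ← mul_inv,
    ← one_div, div_le_div_iff₀ (by positivity) (by positivity)]
  calc t ^ (2 * j) * (c ^ N * (1 + t ^ 2)) ≤ c ^ N * (1 + t ^ 2) ^ N := by
        rw [mul_left_comm]; gcongr
    _ = (c * (1 + t ^ 2)) ^ N := (mul_pow _ _ _).symm
    _ ≤ 1 * (a + t ^ 2) ^ N := by rw [one_mul]; gcongr

lemma integral_pow_div_one_add_sq_pow_pos {j N : ℕ} (hjN : j < N) :
    0 < ∫ t : ℝ, t ^ (2 * j) / (1 + t ^ 2) ^ N := by
  rw [integral_pos_iff_support_of_nonneg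
    (fun t => div_nonneg ((even_two_mul j).pow_nonneg t) (by positivity))
    (integrable_pow_div_add_sq_pow hjN one_pos)]
  have hsupp : Set.Ioi 0 ⊆ Function.support fun t : ℝ => t ^ (2 * j) / (1 + t ^ 2) ^ N :=
    fun t (ht : 0 < t) => (div_pos (pow_pos ht _) (by positivity)).ne'
  exact (measure_mono hsupp).trans_lt' (by simp)

lemma integral_pow_div_add_sq_pow (j N : ℕ) {a : ℝ} (ha : 0 < a) :
    ∫ t : ℝ, t ^ (2 * j) / (a + t ^ 2) ^ N
      = √a ^ (2 * j + 1) / a ^ N * ∫ t : ℝ, t ^ (2 * j) / (1 + t ^ 2) ^ N := by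
  have hc : 0 < √a := Real.sqrt_pos.2 ha
  have hscale : ∀ x : ℝ, (√a * x) ^ (2 * j) / (a + (√a * x) ^ 2) ^ N
      = a ^ j / a ^ N * (x ^ (2 * j) / (1 + x ^ 2) ^ N) := by
    intro x
    rw [mul_pow, pow_mul √a, Real.sq_sqrt ha.le, mul_pow, Real.sq_sqrt ha.le,
      show a + a * x ^ 2 = a * (1 + x ^ 2) by ring, mul_pow]
    ring
  have key := Measure.integral_comp_mul_left (fun t : ℝ => t ^ (2 * j) / (a + t ^ 2) ^ N) √a
  simp only [hscale, integral_const_mul, abs_inv, abs_of_pos hc, smul_eq_mul] at key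
  rw [eq_inv_mul_iff_mul_eq₀ hc.ne'] at key
  rw [← key, pow_succ, pow_mul, Real.sq_sqrt ha.le]
  ring

lemma prod_Iic_mul_prod_Ioi {α M : Type*} [CommMonoid M] [LinearOrder α] [Fintype α]
    [LocallyFiniteOrderBot α] [LocallyFiniteOrderTop α] (f : α → M) (a : α) :
    (∏ x ∈ Iic a, f x) * ∏ x ∈ Ioi a, f x = ∏ x, f x := by
  classical
  rw [← filter_ge_eq_Iic, ← filter_lt_eq_Ioi]
  simpa only [not_le] using prod_filter_mul_prod_filter_not univ (· ≤ a) f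

lemma prod_pow_le_prod_pow {ι R : Type*} [CommSemiring R] [PartialOrder R] [IsOrderedRing R]
    {s : Finset ι} {f g : ι → R} (n : ι → ℕ) (h0 : ∀ i ∈ s, 0 ≤ f i)
    (h : ∀ i ∈ s, f i ≤ g i) : ∏ i ∈ s, f i ^ n i ≤ ∏ i ∈ s, g i ^ n i :=
  prod_le_prod (fun i hi => pow_nonneg (h0 i hi) _) fun i hi =>
    pow_le_pow_left₀ (h0 i hi) (h i hi) _

def sliceWeight {S : ℕ} (a : Fin S → ℝ) (m : Fin S → ℕ) (t : ℝ) : ℝ :=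
  ∏ s, (a s + t ^ 2) ^ m s

def sliceShift {S : ℕ} (a : Fin S → ℝ) (m : Fin S → ℕ) (l : ℕ) (κ : Fin S) : ℝ :=
  a κ ^ ((∑ s ∈ Iic κ, (m s : ℝ)) - l / 2 - 1 / 4) * ∏ s ∈ Ioi κ, a s ^ m s

section Slice

variable {S : ℕ} {a : Fin S → ℝ} {m : Fin S → ℕ} {κ : Fin S}

lemma sliceWeight_pos (ha : ∀ s, 0 < a s) (t : ℝ) : 0 < sliceWeight a m t :=
  prod_pos fun s _ => pow_pos (by linarith [ha s, sq_nonneg t]) _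

lemma sliceShift_pos (ha : ∀ s, 0 < a s) (l : ℕ) : 0 < sliceShift a m l κ :=
  mul_pos (Real.rpow_pos_of_pos (ha κ) _) (prod_pos fun s _ => pow_pos (ha s) _)

lemma pow_mul_pow_mul_prod_le_sliceWeight (ha : ∀ s, 0 ≤ a s) (t : ℝ) :
    t ^ (2 * ∑ s ∈ Iio κ, m s) * (a κ + t ^ 2) ^ m κ * ∏ s ∈ Ioi κ, a s ^ m s
      ≤ sliceWeight a m t := by
  have hnn : ∀ s, 0 ≤ a s + t ^ 2 := fun s => add_nonneg (ha s) (sq_nonneg t)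
  rw [sliceWeight, ← prod_Iic_mul_prod_Ioi _ κ, ← prod_Iio_mul_eq_prod_Iic, pow_mul,
    ← prod_pow_eq_pow_sum]
  refine mul_le_mul (mul_le_mul_of_nonneg_right ?_ (pow_nonneg (hnn κ) _)) ?_
    (prod_nonneg fun s _ => pow_nonneg (ha s) _)
    (mul_nonneg (prod_nonneg fun s _ => pow_nonneg (hnn s) _) (pow_nonneg (hnn κ) _))
  · exact prod_pow_le_prod_pow m (fun _ _ => sq_nonneg t) fun s _ => le_add_of_nonneg_left (ha s)
  · exact prod_pow_le_prod_pow m (fun s _ => ha s) fun s _ => le_add_of_nonneg_right (sq_nonneg t)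

lemma sliceWeight_le {K : Fin S → ℝ} (ha : ∀ s, 0 ≤ a s)
    (hle : ∀ s ≤ κ, a s ≤ K s * a κ) (hge : ∀ s, κ < s → a κ ≤ K s * a s)
    {t : ℝ} (ht : t ^ 2 ≤ a κ) :
    sliceWeight a m t
      ≤ (∏ s, (K s + 1) ^ m s) * (a κ ^ (∑ s ∈ Iic κ, m s) * ∏ s ∈ Ioi κ, a s ^ m s) := by
  have hnn : ∀ s, 0 ≤ a s + t ^ 2 := fun s => add_nonneg (ha s) (sq_nonneg t)
  have hIic : ∀ s ∈ Iic κ, a s + t ^ 2 ≤ (K s + 1) * a κ := fun s hs => by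
    linarith [hle s (mem_Iic.1 hs)]
  have hIoi : ∀ s ∈ Ioi κ, a s + t ^ 2 ≤ (K s + 1) * a s := fun s hs => by
    linarith [hge s (mem_Ioi.1 hs)]
  calc sliceWeight a m t
      = (∏ s ∈ Iic κ, (a s + t ^ 2) ^ m s) * ∏ s ∈ Ioi κ, (a s + t ^ 2) ^ m s :=
        (prod_Iic_mul_prod_Ioi _ κ).symm
    _ ≤ (∏ s ∈ Iic κ, ((K s + 1) * a κ) ^ m s) * ∏ s ∈ Ioi κ, ((K s + 1) * a s) ^ m s :=
        mul_le_mul (prod_pow_le_prod_pow m (fun s _ => hnn s) hIic)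
          (prod_pow_le_prod_pow m (fun s _ => hnn s) hIoi)
          (prod_nonneg fun s _ => pow_nonneg (hnn s) _)
          (prod_nonneg fun s hs => pow_nonneg ((hnn s).trans (hIic s hs)) _)
    _ = _ := by
        simp only [mul_pow, prod_mul_distrib, prod_pow_eq_pow_sum]
        rw [← prod_Iic_mul_prod_Ioi (fun s => (K s + 1) ^ m s) κ]
        ring

lemma sliceShift_sq_mul (ha : ∀ s, 0 < a s) (l : ℕ) :
    sliceShift a m l κ ^ 2 * √(a κ) ^ (2 * l + 1)
      = a κ ^ (2 * ∑ s ∈ Iic κ, m s) * (∏ s ∈ Ioi κ, a s ^ m s) ^ 2 := by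
  have hA := (ha κ).le
  rw [sliceShift, mul_pow, Real.sqrt_eq_rpow, ← Real.rpow_natCast (a κ ^ _) 2,
    ← Real.rpow_natCast (a κ ^ _) (2 * l + 1), ← Real.rpow_mul hA, ← Real.rpow_mul hA,
    mul_right_comm, ← Real.rpow_add (ha κ), ← Real.rpow_natCast (a κ) (2 * _)]
  congr 2
  push_cast
  ring

variable {l j : ℕ}

lemma sliceShift_sq_mul_of_eq_add (ha : ∀ s, 0 < a s) (hl : l = 2 * ∑ s ∈ Iio κ, m s + j) :
    sliceShift a m l κ ^ 2 * √(a κ) ^ (2 * j + 1)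
      = a κ ^ (2 * m κ) * (∏ s ∈ Ioi κ, a s ^ m s) ^ 2 := by
  have hpow : √(a κ) ^ (2 * l + 1) = √(a κ) ^ (2 * j + 1) * a κ ^ (2 * ∑ s ∈ Iio κ, m s) := by
    rw [hl, show 2 * (2 * ∑ s ∈ Iio κ, m s + j) + 1 = 2 * j + 1 + 2 * (2 * ∑ s ∈ Iio κ, m s)
      by ring, pow_add, pow_mul, Real.sq_sqrt (ha κ).le]
  have h := sliceShift_sq_mul (m := m) (κ := κ) ha l
  rw [hpow, ← sum_Iio_add_eq_sum_Iic] at h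
  refine mul_right_cancel₀ (pow_ne_zero (2 * ∑ s ∈ Iio κ, m s) (ha κ).ne') ?_
  linear_combination h

lemma sliceIntegrand_le (ha : ∀ s, 0 < a s) (hl : l = 2 * ∑ s ∈ Iio κ, m s + j) (t : ℝ) :
    t ^ (2 * l) / sliceWeight a m t ^ 2
      ≤ t ^ (2 * j) / (a κ + t ^ 2) ^ (2 * m κ) / (∏ s ∈ Ioi κ, a s ^ m s) ^ 2 := by
  have hA : 0 < a κ + t ^ 2 := by linarith [ha κ, sq_nonneg t]
  have hQ : 0 < ∏ s ∈ Ioi κ, a s ^ m s := prod_pos fun s _ => pow_pos (ha s) _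
  have hlow := pow_mul_pow_mul_prod_le_sliceWeight (m := m) (κ := κ) (fun s => (ha s).le) t
  rw [div_div, div_le_div_iff₀ (pow_pos (sliceWeight_pos ha t) 2) (by positivity)]
  calc t ^ (2 * l) * ((a κ + t ^ 2) ^ (2 * m κ) * (∏ s ∈ Ioi κ, a s ^ m s) ^ 2)
      = t ^ (2 * j) * (t ^ (2 * ∑ s ∈ Iio κ, m s) * (a κ + t ^ 2) ^ m κ
          * ∏ s ∈ Ioi κ, a s ^ m s) ^ 2 := by
        subst hl; ring
    _ ≤ t ^ (2 * j) * sliceWeight a m t ^ 2 :=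
        mul_le_mul_of_nonneg_left
          (pow_le_pow_left₀ (by rw [pow_mul]; positivity) hlow 2) ((even_two_mul j).pow_nonneg t)

lemma integrable_sliceIntegrand (ha : ∀ s, 0 < a s) (hl : l = 2 * ∑ s ∈ Iio κ, m s + j)
    (hj : j < 2 * m κ) : Integrable fun t : ℝ => t ^ (2 * l) / sliceWeight a m t ^ 2 :=
  ((integrable_pow_div_add_sq_pow hj (ha κ)).div_const _).mono'
    (Measurable.aestronglyMeasurable (by unfold sliceWeight; fun_prop))
    (ae_of_all _ fun t => by
      rw [Real.norm_eq_abs,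
        abs_of_nonneg (div_nonneg ((even_two_mul l).pow_nonneg t) (sq_nonneg _))]
      exact sliceIntegrand_le ha hl t)

lemma integral_le_div_sliceShift_sq (ha : ∀ s, 0 < a s) (hl : l = 2 * ∑ s ∈ Iio κ, m s + j)
    (hj : j < 2 * m κ) :
    ∫ t, t ^ (2 * l) / sliceWeight a m t ^ 2
      ≤ (∫ t, t ^ (2 * j) / (1 + t ^ 2) ^ (2 * m κ)) / sliceShift a m l κ ^ 2 := by
  have hA := ha κ
  have hshift := sliceShift_sq_mul_of_eq_add ha hl
  calc ∫ t, t ^ (2 * l) / sliceWeight a m t ^ 2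
      ≤ ∫ t, t ^ (2 * j) / (a κ + t ^ 2) ^ (2 * m κ) / (∏ s ∈ Ioi κ, a s ^ m s) ^ 2 :=
        integral_mono (integrable_sliceIntegrand ha hl hj)
          ((integrable_pow_div_add_sq_pow hj hA).div_const _) (sliceIntegrand_le ha hl)
    _ = _ := by
        rw [integral_div, integral_pow_div_add_sq_pow _ _ hA]
        have hshift_pos := sliceShift_pos (m := m) (κ := κ) ha l
        have hQ : 0 < ∏ s ∈ Ioi κ, a s ^ m s := prod_pos fun s _ => pow_pos (ha s) _
        field_simp
        linear_combination (∫ t, t ^ (2 * j) / (1 + t ^ 2) ^ (2 * m κ)) * hshift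

lemma div_sliceShift_sq_le_integral {K : Fin S → ℝ} (ha : ∀ s, 0 < a s)
    (hle : ∀ s ≤ κ, a s ≤ K s * a κ) (hge : ∀ s, κ < s → a κ ≤ K s * a s)
    (hint : Integrable fun t : ℝ => t ^ (2 * l) / sliceWeight a m t ^ 2) :
    ((2 * l + 1) * (∏ s, (K s + 1) ^ m s) ^ 2)⁻¹ / sliceShift a m l κ ^ 2
      ≤ ∫ t, t ^ (2 * l) / sliceWeight a m t ^ 2 := by
  set D := ∏ s, (K s + 1) ^ m s
  set B := D * (a κ ^ (∑ s ∈ Iic κ, m s) * ∏ s ∈ Ioi κ, a s ^ m s)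
  have hA := ha κ
  have hW_le : ∀ t ∈ Set.Ioc 0 √(a κ), sliceWeight a m t ≤ B := fun t ht =>
    sliceWeight_le (fun s => (ha s).le) hle hge ((Real.le_sqrt ht.1.le hA.le).1 ht.2)
  have hB2 : B ^ 2 = D ^ 2 * (sliceShift a m l κ ^ 2 * √(a κ) ^ (2 * l + 1)) := by
    rw [sliceShift_sq_mul ha]
    ring
  calc ((2 * l + 1) * D ^ 2)⁻¹ / sliceShift a m l κ ^ 2
      = ∫ t in Set.Ioc 0 √(a κ), t ^ (2 * l) / B ^ 2 := by
        rw [integral_div, ← intervalIntegral.integral_of_le (Real.sqrt_nonneg _), integral_pow,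
          zero_pow (Nat.succ_ne_zero _), sub_zero, hB2]
        push_cast
        field_simp
    _ ≤ ∫ t in Set.Ioc 0 √(a κ), t ^ (2 * l) / sliceWeight a m t ^ 2 :=
        setIntegral_mono_on ((continuous_pow _).div_const _).integrableOn_Ioc hint.integrableOn
          measurableSet_Ioc fun t ht => div_le_div_of_nonneg_left ((even_two_mul l).pow_nonneg t)
            (pow_pos (sliceWeight_pos ha t) 2)
            (pow_le_pow_left₀ (sliceWeight_pos ha t).le (hW_le t ht) 2)
    _ ≤ ∫ t, t ^ (2 * l) / sliceWeight a m t ^ 2 :=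
        setIntegral_le_integral hint
          (ae_of_all _ fun t => div_nonneg ((even_two_mul l).pow_nonneg t) (sq_nonneg _))

lemma integral_rpow_neg_half_mem_Icc {K : Fin S → ℝ} (ha : ∀ s, 0 < a s)
    (hl : l = 2 * ∑ s ∈ Iio κ, m s + j) (hj : j < 2 * m κ)
    (hle : ∀ s ≤ κ, a s ≤ K s * a κ) (hge : ∀ s, κ < s → a κ ≤ K s * a s) :
    (∫ t, t ^ (2 * l) / sliceWeight a m t ^ 2) ^ (-(1 : ℝ) / 2) ∈ Set.Icc
      ((∫ t, t ^ (2 * j) / (1 + t ^ 2) ^ (2 * m κ)) ^ (-(1 : ℝ) / 2) * sliceShift a m l κ)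
      (((2 * l + 1) * (∏ s, (K s + 1) ^ m s) ^ 2)⁻¹ ^ (-(1 : ℝ) / 2) * sliceShift a m l κ) := by
  have hK : ∀ s, 0 < K s + 1 := fun s => by
    rcases le_or_gt s κ with hs | hs
    · nlinarith [hle s hs, ha s, ha κ]
    · nlinarith [hge s hs, ha s, ha κ]
  have hc : 0 < ((2 * l + 1) * (∏ s, (K s + 1) ^ m s) ^ 2)⁻¹ :=
    inv_pos.2 (mul_pos (by positivity) (pow_pos (prod_pos fun s _ => pow_pos (hK s) _) 2))
  have hshift_nonneg := (sliceShift_pos (m := m) (κ := κ) ha l).le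
  have hJ := integral_pow_div_one_add_sq_pow_pos hj
  have hlow := div_sliceShift_sq_le_integral ha hle hge (integrable_sliceIntegrand ha hl hj)
  have hlow_pos := div_pos hc (pow_pos (sliceShift_pos (m := m) (κ := κ) ha l) 2)
  have hI := hlow_pos.trans_le hlow
  constructor
  · rw [← rpow_neg_half_div_sq hJ.le hshift_nonneg]
    exact Real.rpow_le_rpow_of_nonpos hI (integral_le_div_sliceShift_sq ha hl hj) (by norm_num)
  · rw [← rpow_neg_half_div_sq hc.le hshift_nonneg]
    exact Real.rpow_le_rpow_of_nonpos hlow_pos hlow (by norm_num)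

end Slice

lemma XiWeight_snocVec {k S : ℕ} (r : Fin S → ℝ) (m : Fin S → ℕ)
    (ξ' : EuclideanSpace ℝ (Fin k)) (t lam : ℝ) :
    XiWeight r m (snocVec ξ' t) lam = sliceWeight (fun s => ‖ξ'‖ ^ 2 + lam ^ (2 / r s)) m t := by
  simp only [XiWeight, sliceWeight, norm_snocVec_sq, add_right_comm]

lemma XiShift_eq_sliceShift {k S : ℕ} (r : Fin S → ℝ) (m : Fin S → ℕ) (l : ℕ) (κ : Fin S)
    (ξ' : EuclideanSpace ℝ (Fin k)) (lam : ℝ) :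
    XiShift r m l κ ξ' lam = sliceShift (fun s => ‖ξ'‖ ^ 2 + lam ^ (2 / r s)) m l κ :=
  rfl

theorem statement9_general (k S : ℕ) (r : Fin S → ℝ) (m : Fin S → ℕ)
    (hrpos : ∀ s, 0 < r s) (hr : StrictAnti r)
    (l : ℕ) (κ : Fin S)
    (hκ1 : 2 * ∑ s ∈ Finset.Iio κ, m s ≤ l)
    (hκ2 : l < 2 * ∑ s ∈ Finset.Iic κ, m s) :
    ∀ lam0 : ℝ, 0 < lam0 →
      ∃ C₁ > (0 : ℝ), ∃ C₂ > (0 : ℝ), ∀ lam : ℝ, lam0 ≤ lam →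
        ∀ ξ' : EuclideanSpace ℝ (Fin k),
          C₁ * XiShift r m l κ ξ' lam
              ≤ (∫ t : ℝ, t ^ (2 * l) / XiWeight r m (snocVec ξ' t) lam ^ 2) ^ (-(1 : ℝ) / 2) ∧
          (∫ t : ℝ, t ^ (2 * l) / XiWeight r m (snocVec ξ' t) lam ^ 2) ^ (-(1 : ℝ) / 2)
              ≤ C₂ * XiShift r m l κ ξ' lam := by
  intro lam0 hlam0
  obtain ⟨j, hl⟩ := Nat.exists_eq_add_of_le hκ1
  have hj : j < 2 * m κ := by rw [← sum_Iio_add_eq_sum_Iic] at hκ2; omega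
  set K : Fin S → ℝ := fun s => max 1 (lam0 ^ (-|2 / r s - 2 / r κ|))
  refine ⟨(∫ t, t ^ (2 * j) / (1 + t ^ 2) ^ (2 * m κ)) ^ (-(1 : ℝ) / 2),
    Real.rpow_pos_of_pos (integral_pow_div_one_add_sq_pow_pos hj) _,
    (((2 * l + 1) * (∏ s, (K s + 1) ^ m s) ^ 2)⁻¹) ^ (-(1 : ℝ) / 2),
    Real.rpow_pos_of_pos (by positivity) _, fun lam hlam ξ' => ?_⟩
  have hlam_pos := hlam0.trans_le hlam
  set a : Fin S → ℝ := fun s => ‖ξ'‖ ^ 2 + lam ^ (2 / r s)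
  have ha : ∀ s, 0 < a s := fun s =>
    add_pos_of_nonneg_of_pos (sq_nonneg _) (Real.rpow_pos_of_pos hlam_pos _)
  have hle : ∀ s ≤ κ, a s ≤ K s * a κ := fun s hs => by
    have h := div_le_div_of_nonneg_left zero_le_two (hrpos κ) (hr.antitone hs)
    dsimp only [a, K]
    rw [abs_of_nonpos (sub_nonpos.2 h), neg_neg]
    exact add_rpow_le_max_mul_add_rpow (sq_nonneg ‖ξ'‖) hlam0 hlam h
  have hge : ∀ s, κ < s → a κ ≤ K s * a s := fun s hs => by
    have h := div_le_div_of_nonneg_left zero_le_two (hrpos s) (hr hs).le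
    dsimp only [a, K]
    rw [abs_of_nonneg (sub_nonneg.2 h), neg_sub]
    exact add_rpow_le_max_mul_add_rpow (sq_nonneg ‖ξ'‖) hlam0 hlam h
  simp only [XiWeight_snocVec, XiShift_eq_sliceShift]
  exact integral_rpow_neg_half_mem_Icc ha hl hj hle hge

/-- `(∫ ξₙ^{2l} Ξ(ξ,λ)^{-2} dξₙ)^{-1/2}` is equivalent, uniformly in
`λ ≥ λ₀` and `ξ'`, to the shifted weight `Ξ^{(-l-1/2)}(ξ',λ)`. -/
theorem statement9 (k S : ℕ) (hS : 0 < S) (r : Fin S → ℝ) (m : Fin S → ℕ)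
    (hm : ∀ s, 0 < m s) (hrpos : ∀ s, 0 < r s) (hr : StrictAnti r)
    (l : ℕ) (hl : l < 2 * ∑ s, m s) (κ : Fin S)
    (hκ1 : 2 * ∑ s ∈ Finset.Iio κ, m s ≤ l)
    (hκ2 : l < 2 * ∑ s ∈ Finset.Iic κ, m s) :
    ∀ lam0 : ℝ, 0 < lam0 →
      ∃ C₁ > (0 : ℝ), ∃ C₂ > (0 : ℝ), ∀ lam : ℝ, lam0 ≤ lam →
        ∀ ξ' : EuclideanSpace ℝ (Fin k),
          C₁ * XiShift r m l κ ξ' lam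
              ≤ (∫ t : ℝ, t ^ (2 * l) / XiWeight r m (snocVec ξ' t) lam ^ 2) ^ (-(1 : ℝ) / 2) ∧
          (∫ t : ℝ, t ^ (2 * l) / XiWeight r m (snocVec ξ' t) lam ^ 2) ^ (-(1 : ℝ) / 2)
              ≤ C₂ * XiShift r m l κ ξ' lam :=
  statement9_general k S r m hrpos hr l κ hκ1 hκ2

end
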